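/- arXiv:math/0405245 — 3 statements merged into one kernel-verified Lean document; each statement's English description precedes it below -/
import Mathlib

section
/- Let H be a positive even integer and let ξ ∈ ℂ with ξ ≠ 0. Define on L_H: φ_ξ(x) = exp(−ξπx²), c_ξ(p) = ∑_{x∈L_H} ε·exp(−ξπ(x + (i/ξ)p)²) and c_{1/ξ}(p) = ∑_{x∈L_H} ε·exp(−(π/ξ)(x + iξp)²). Then for every x′ ∈ L_H, φ_ξ(x′) = ((F̄c_ξ) ∗ g)(x′), where g : L_H → ℂ is defined by g(x) = c_{1/ξ}(−x)·φ_ξ(x). -/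
/-- The canonical integer representative `z` of `u ∈ ℤ/H²ℤ` with `−H²/2 ≤ z < H²/2`,
so that the lattice point of `L_H` corresponding to `u` is `εz = z/H`. -/
def latLift (H : ℕ) (u : ZMod (H ^ 2)) : ℤ :=
  if (u.val : ℤ) < ((H : ℤ) ^ 2) / 2 then (u.val : ℤ) else (u.val : ℤ) - (H : ℤ) ^ 2

/-- The lattice point `εz ∈ L_H ⊆ ℚ ⊆ ℂ` corresponding to `u ∈ ℤ/H²ℤ`. -/
noncomputable def latC (H : ℕ) (u : ZMod (H ^ 2)) : ℂ :=
  (latLift H u : ℂ) / (H : ℂ)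

/-- The inverse infinitesimal Fourier transform
`(F̄ψ)(x) = ∑_{p ∈ L_H} ε · exp(2πipx) · ψ(p)`. -/
noncomputable def FtransInv (H : ℕ) [NeZero H] (ψ : ZMod (H ^ 2) → ℂ) (x : ZMod (H ^ 2)) : ℂ :=
  ∑ p : ZMod (H ^ 2),
    (H : ℂ)⁻¹ * Complex.exp (2 * Real.pi * Complex.I * latC H p * latC H x) * ψ p

/-- The convolution `(f ∗ g)(x) = ∑_{y ∈ L_H} ε · f(x − y) · g(y)`, with `x − y`
reduced modulo `H` so as to lie in `L_H`. -/
noncomputable def latConv (H : ℕ) [NeZero H] (f g : ZMod (H ^ 2) → ℂ) (x : ZMod (H ^ 2)) : ℂ :=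
  ∑ y : ZMod (H ^ 2), (H : ℂ)⁻¹ * f (x - y) * g y

/-- `c_ξ(p) = ∑_{x ∈ L_H} ε · exp(−ξπ(x + (i/ξ)p)²)`. -/
noncomputable def cXi (H : ℕ) [NeZero H] (ξ : ℂ) (p : ZMod (H ^ 2)) : ℂ :=
  ∑ x : ZMod (H ^ 2),
    (H : ℂ)⁻¹ * Complex.exp (-(ξ * Real.pi * (latC H x + Complex.I / ξ * latC H p) ^ 2))

/-- `c_{1/ξ}(p) = ∑_{x ∈ L_H} ε · exp(−(π/ξ)(x + iξp)²)`. -/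
noncomputable def cXiInv (H : ℕ) [NeZero H] (ξ : ℂ) (p : ZMod (H ^ 2)) : ℂ :=
  ∑ x : ZMod (H ^ 2),
    (H : ℂ)⁻¹ * Complex.exp (-((Real.pi : ℂ) / ξ * (latC H x + Complex.I * ξ * latC H p) ^ 2))

noncomputable def zet (H : ℕ) : ℂ := Complex.exp (2 * Real.pi * Complex.I / ((H : ℂ) ^ 2))

lemma zet_ne_zero (H : ℕ) : zet H ≠ 0 := Complex.exp_ne_zero _

lemma zet_zpow (H : ℕ) (m : ℤ) :
    zet H ^ m = Complex.exp (2 * Real.pi * Complex.I * m / ((H : ℂ) ^ 2)) := by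
  rw [zet, ← Complex.exp_int_mul]
  congr 1
  ring

lemma latLift_intCast (H : ℕ) [NeZero H] (u : ZMod (H ^ 2)) :
    ((latLift H u : ℤ) : ZMod (H ^ 2)) = u := by
  have h : ((u.val : ℤ) : ZMod (H ^ 2)) = u := by
    push_cast
    simp [ZMod.natCast_val, ZMod.cast_id]
  unfold latLift
  split
  · exact h
  · push_cast
    rw [sub_eq_add_neg]
    have : ((H : ZMod (H ^ 2)) ^ 2) = 0 := by
      have := ZMod.natCast_self (H ^ 2)
      push_cast at this
      exact this
    simp [h, this]

lemma zet_zpow_congr (H : ℕ) [NeZero H] {a b : ℤ}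
    (h : ((a : ℤ) : ZMod (H ^ 2)) = b) : zet H ^ a = zet H ^ b := by
  rw [ZMod.intCast_eq_intCast_iff] at h
  obtain ⟨k, hk⟩ := h.dvd
  have hb : b = a + ((H : ℤ) ^ 2) * k := by push_cast at hk ⊢; omega
  have hz : zet H ^ ((H : ℤ) ^ 2) = 1 := by
    rw [zet_zpow]
    have hH : ((H : ℂ)) ≠ 0 := Nat.cast_ne_zero.mpr (NeZero.ne H)
    rw [show 2 * (Real.pi : ℂ) * Complex.I * ((H : ℤ) ^ 2 : ℤ) / ((H : ℂ) ^ 2)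
        = 2 * Real.pi * Complex.I from by push_cast; field_simp]
    exact Complex.exp_two_pi_mul_I
  rw [hb, zpow_add₀ (zet_ne_zero H), zpow_mul, hz, one_zpow, mul_one]

lemma exp_lat (H : ℕ) [NeZero H] (u v : ZMod (H ^ 2)) :
    Complex.exp (2 * Real.pi * Complex.I * latC H u * latC H v)
      = zet H ^ (latLift H u * latLift H v) := by
  have hH : ((H : ℂ)) ≠ 0 := Nat.cast_ne_zero.mpr (NeZero.ne H)
  rw [zet_zpow]
  congr 1
  unfold latC
  push_cast
  field_simp

lemma exp_lat_neg (H : ℕ) [NeZero H] (u v : ZMod (H ^ 2)) :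
    Complex.exp (-(2 * Real.pi * Complex.I * latC H u * latC H v))
      = zet H ^ (-(latLift H u * latLift H v)) := by
  rw [Complex.exp_neg, exp_lat, ← zpow_neg]

lemma sum_pow_val (H : ℕ) [NeZero H] (c : ℂ) :
    ∑ v : ZMod (H ^ 2), c ^ v.val = ∑ i ∈ Finset.range (H ^ 2), c ^ i := by
  refine Finset.sum_nbij' (fun v => v.val) (fun i => (i : ZMod (H ^ 2))) ?_ ?_ ?_ ?_ ?_
  · intro a _; exact Finset.mem_range.mpr (ZMod.val_lt a)
  · intro a _; exact Finset.mem_univ _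
  · intro a _; simp [ZMod.natCast_val, ZMod.cast_id]
  · intro a ha; exact ZMod.val_cast_of_lt (Finset.mem_range.mp ha)
  · intro a _; rfl

lemma c_pow_congr (H : ℕ) {c : ℂ} (hc : c ≠ 0)
    (h1 : c ^ ((H : ℤ) ^ 2) = 1) (a b : ℤ) (h : ((H : ℤ) ^ 2) ∣ b - a) :
    c ^ a = c ^ b := by
  obtain ⟨k, hk⟩ := h
  have : b = a + ((H : ℤ) ^ 2) * k := by omega
  rw [this, zpow_add₀ hc, zpow_mul, h1, one_zpow, mul_one]

lemma latLift_sub_val_dvd (H : ℕ) [NeZero H] (v : ZMod (H ^ 2)) :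
    ((H : ℤ) ^ 2) ∣ ((v.val : ℤ) - latLift H v) := by
  unfold latLift
  split
  · simp
  · exact ⟨1, by ring⟩

lemma orth (H : ℕ) [NeZero H] (h2 : 2 ≤ H) (u : ZMod (H ^ 2)) :
    ∑ v : ZMod (H ^ 2), zet H ^ (latLift H u * latLift H v)
      = if u = 0 then ((H : ℂ) ^ 2) else 0 := by
  have hH : ((H : ℂ)) ≠ 0 := Nat.cast_ne_zero.mpr (NeZero.ne H)
  set c : ℂ := zet H ^ (latLift H u) with hc
  have hc0 : c ≠ 0 := zpow_ne_zero _ (zet_ne_zero H)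
  have hz : zet H ^ ((H : ℤ) ^ 2) = 1 := by
    rw [zet_zpow]
    rw [show 2 * (Real.pi : ℂ) * Complex.I * ((H : ℤ) ^ 2 : ℤ) / ((H : ℂ) ^ 2)
        = 2 * Real.pi * Complex.I from by push_cast; field_simp]
    exact Complex.exp_two_pi_mul_I
  have hcN : c ^ ((H : ℤ) ^ 2) = 1 := by
    rw [hc, ← zpow_mul, mul_comm, zpow_mul, hz, one_zpow]
  have hterm : ∀ v : ZMod (H ^ 2),
      zet H ^ (latLift H u * latLift H v) = c ^ v.val := by
    intro v
    have h1 : zet H ^ (latLift H u * latLift H v) = c ^ latLift H v := by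
      rw [hc, ← zpow_mul]
    rw [h1, c_pow_congr H hc0 hcN (latLift H v) ((v.val : ℤ))
      (latLift_sub_val_dvd H v), zpow_natCast]
  simp only [hterm]
  rw [sum_pow_val]
  by_cases hu : u = 0
  · subst hu
    have hsq : (4 : ℤ) ≤ (H : ℤ) ^ 2 := by
      have : (2 : ℤ) ≤ (H : ℤ) := by exact_mod_cast h2
      nlinarith
    have hl : latLift H 0 = 0 := by
      unfold latLift
      rw [ZMod.val_zero]
      simp only [Nat.cast_zero]
      rw [if_pos (by omega)]
    have : c = 1 := by rw [hc, hl, zpow_zero]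
    rw [this]
    simp
  · rw [if_neg hu]
    have hc1 : c ≠ 1 := by
      intro hone
      apply hu
      rw [hc, zet_zpow] at hone
      rw [Complex.exp_eq_one_iff] at hone
      obtain ⟨n, hn⟩ := hone
      have hπ : (Real.pi : ℂ) ≠ 0 := by
        exact_mod_cast Real.pi_ne_zero
      have hI : Complex.I ≠ 0 := Complex.I_ne_zero
      have hlat : (latLift H u : ℂ) = (n : ℂ) * ((H : ℂ) ^ 2) := by
        have h2πI : (2 * (Real.pi : ℂ) * Complex.I) ≠ 0 := by
          simp [Real.pi_ne_zero, Complex.I_ne_zero]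
        apply mul_left_cancel₀ h2πI
        field_simp at hn
        linear_combination (2 * (Real.pi : ℂ) * Complex.I) * hn
      have hlat' : latLift H u = n * (H : ℤ) ^ 2 := by exact_mod_cast hlat
      have := latLift_intCast H u
      rw [hlat'] at this
      rw [← this]
      push_cast
      rw [show ((H : ZMod (H ^ 2)) ^ 2) = 0 from by
        have := ZMod.natCast_self (H ^ 2); push_cast at this; exact this]
      ring
    have hcNn : c ^ (H ^ 2 : ℕ) = 1 := by
      have := hcN
      rw [show ((H : ℤ) ^ 2) = ((H ^ 2 : ℕ) : ℤ) from by push_cast; ring,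
        zpow_natCast] at this
      exact this
    rw [geom_sum_eq hc1, hcNn, sub_self, zero_div]

lemma latC_neg_sq (H : ℕ) [NeZero H] (hH : Even H) (x : ZMod (H ^ 2)) :
    latC H (-x) ^ 2 = latC H x ^ 2 := by
  have key : latLift H (-x) = latLift H x ∨ latLift H (-x) = -latLift H x := by
    by_cases hx : x = 0
    · subst hx; left; rw [neg_zero]
    · have hval : (-x).val = H ^ 2 - x.val := by
        rw [ZMod.neg_val, if_neg hx]
      have hxlt : x.val < H ^ 2 := ZMod.val_lt x
      have hxpos : 0 < x.val := Nat.pos_of_ne_zero (fun h => hx ((ZMod.val_eq_zero x).mp h))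
      obtain ⟨k, hk⟩ := hH
      have hN : (H : ℤ) ^ 2 = 2 * (2 * (k : ℤ) ^ 2) := by
        have h2 : (H : ℤ) = 2 * (k : ℤ) := by
          have : H = 2 * k := by omega
          exact_mod_cast this
        rw [h2]; ring
      unfold latLift
      rw [hval]
      have hcast : ((H ^ 2 - x.val : ℕ) : ℤ) = (H : ℤ) ^ 2 - (x.val : ℤ) := by
        push_cast [Nat.cast_sub hxlt.le]
        ring
      rw [hcast]
      split <;> split <;> omega
  unfold latC
  rcases key with h | h <;> rw [h] <;> push_cast <;> ring

lemma sq_expand1 (ξ a b : ℂ) (hξ : ξ ≠ 0) (π : ℂ) :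
    -(ξ * π * (a + Complex.I / ξ * b) ^ 2)
      = π / ξ * b ^ 2 + (-(2 * π * Complex.I * b * a) + -(ξ * π * a ^ 2)) := by
  have hI : Complex.I ^ 2 = -1 := Complex.I_sq
  field_simp
  linear_combination (-(π * b ^ 2)) * hI

lemma sq_expand2 (ξ a b : ℂ) (hξ : ξ ≠ 0) (π : ℂ) :
    -(π / ξ * (a + Complex.I * ξ * b) ^ 2)
      = π * ξ * b ^ 2 + (-(2 * π * Complex.I * b * a) + -(π / ξ * a ^ 2)) := by
  have hI : Complex.I ^ 2 = -1 := Complex.I_sq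
  field_simp
  linear_combination (-(ξ ^ 2 * π * b ^ 2)) * hI

lemma cXi_eq (H : ℕ) [NeZero H] (ξ : ℂ) (hξ : ξ ≠ 0) (p : ZMod (H ^ 2)) :
    cXi H ξ p = Complex.exp ((Real.pi : ℂ) / ξ * latC H p ^ 2) *
      ∑ x : ZMod (H ^ 2), (H : ℂ)⁻¹ * zet H ^ (-(latLift H p * latLift H x)) *
        Complex.exp (-(ξ * Real.pi * latC H x ^ 2)) := by
  unfold cXi
  rw [Finset.mul_sum]
  refine Finset.sum_congr rfl fun x _ => ?_
  rw [sq_expand1 ξ (latC H x) (latC H p) hξ, Complex.exp_add, Complex.exp_add,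
    show -(2 * (Real.pi : ℂ) * Complex.I * latC H p * latC H x)
      = -(2 * Real.pi * Complex.I * latC H p * latC H x) from by ring,
    exp_lat_neg]
  ring

lemma g_eq (H : ℕ) [NeZero H] (hH : Even H) (ξ : ℂ) (hξ : ξ ≠ 0) (y : ZMod (H ^ 2)) :
    cXiInv H ξ (-y) * Complex.exp (-(ξ * Real.pi * latC H y ^ 2))
      = ∑ w : ZMod (H ^ 2), (H : ℂ)⁻¹ * zet H ^ (latLift H w * latLift H y) *
          Complex.exp (-((Real.pi : ℂ) / ξ * latC H w ^ 2)) := by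
  unfold cXiInv
  rw [Finset.sum_mul]
  refine Finset.sum_congr rfl fun w _ => ?_
  rw [sq_expand2 ξ (latC H w) (latC H (-y)) hξ, Complex.exp_add, Complex.exp_add]
  have h1 : Complex.exp ((Real.pi : ℂ) * ξ * latC H (-y) ^ 2) *
      Complex.exp (-(ξ * Real.pi * latC H y ^ 2)) = 1 := by
    rw [latC_neg_sq H hH, ← Complex.exp_add,
      show (Real.pi : ℂ) * ξ * latC H y ^ 2 + -(ξ * Real.pi * latC H y ^ 2) = 0 from by ring]
    exact Complex.exp_zero
  have h2 : Complex.exp (-(2 * (Real.pi : ℂ) * Complex.I * latC H (-y) * latC H w))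
      = zet H ^ (latLift H w * latLift H y) := by
    rw [exp_lat_neg]
    apply zet_zpow_congr
    push_cast [latLift_intCast]
    ring
  rw [h2]
  calc (H : ℂ)⁻¹ * (Complex.exp ((Real.pi : ℂ) * ξ * latC H (-y) ^ 2) *
        (zet H ^ (latLift H w * latLift H y) *
          Complex.exp (-((Real.pi : ℂ) / ξ * latC H w ^ 2)))) *
        Complex.exp (-(ξ * Real.pi * latC H y ^ 2))
      = (H : ℂ)⁻¹ * zet H ^ (latLift H w * latLift H y) *
          Complex.exp (-((Real.pi : ℂ) / ξ * latC H w ^ 2)) *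
        (Complex.exp ((Real.pi : ℂ) * ξ * latC H (-y) ^ 2) *
          Complex.exp (-(ξ * Real.pi * latC H y ^ 2))) := by ring
    _ = _ := by rw [h1, mul_one]


/-- For `φ_ξ(x) = exp(−ξπx²)` one has `φ_ξ(x′) = ((F̄c_ξ) ∗ g)(x′)`, where
`g(x) = c_{1/ξ}(−x) · φ_ξ(x)`. -/
theorem gaussian_convolution_identity (H : ℕ) [NeZero H] (hH : Even H)
    (ξ : ℂ) (hξ : ξ ≠ 0) (x' : ZMod (H ^ 2)) :
    Complex.exp (-(ξ * Real.pi * latC H x' ^ 2))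
      = latConv H (FtransInv H (cXi H ξ))
          (fun x => cXiInv H ξ (-x) * Complex.exp (-(ξ * Real.pi * latC H x ^ 2))) x' := by
  have h2 : 2 ≤ H := by
    rcases hH with ⟨k, hk⟩
    have := NeZero.ne H
    omega
  have hHc : ((H : ℂ)) ≠ 0 := Nat.cast_ne_zero.mpr (NeZero.ne H)
  have hz0 : zet H ≠ 0 := zet_ne_zero H
  obtain ⟨ε, hε⟩ : ∃ e : ℂ, e = (H : ℂ)⁻¹ := ⟨_, rfl⟩
  obtain ⟨φ, hφ⟩ : ∃ f : ZMod (H ^ 2) → ℂ,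
      f = fun x => Complex.exp (-(ξ * Real.pi * latC H x ^ 2)) := ⟨_, rfl⟩
  obtain ⟨ψ, hψ⟩ : ∃ f : ZMod (H ^ 2) → ℂ,
      f = fun w => Complex.exp (-((Real.pi : ℂ) / ξ * latC H w ^ 2)) := ⟨_, rfl⟩
  obtain ⟨q, hq⟩ : ∃ f : ZMod (H ^ 2) → ℂ,
      f = fun p => Complex.exp ((Real.pi : ℂ) / ξ * latC H p ^ 2) := ⟨_, rfl⟩
  obtain ⟨S, hS⟩ : ∃ f : ZMod (H ^ 2) → ℂ,
      f = fun p => ∑ x : ZMod (H ^ 2), ε * zet H ^ (-(latLift H p * latLift H x)) * φ x :=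
    ⟨_, rfl⟩
  have hqψ : ∀ p, q p * ψ p = 1 := by
    intro p
    simp only [hq, hψ]
    rw [← Complex.exp_add,
      show (Real.pi : ℂ) / ξ * latC H p ^ 2 + -((Real.pi : ℂ) / ξ * latC H p ^ 2) = 0 from by
        ring]
    exact Complex.exp_zero
  -- Step 1: expand everything
  have step1 : latConv H (FtransInv H (cXi H ξ))
      (fun x => cXiInv H ξ (-x) * Complex.exp (-(ξ * Real.pi * latC H x ^ 2))) x'
      = ∑ y : ZMod (H ^ 2), ∑ p : ZMod (H ^ 2), ∑ w : ZMod (H ^ 2),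
          ε * ((ε * zet H ^ (latLift H p * latLift H (x' - y)) * (q p * S p))
            * (ε * zet H ^ (latLift H w * latLift H y) * ψ w)) := by
    unfold latConv
    refine Finset.sum_congr rfl fun y _ => ?_
    have hg : cXiInv H ξ (-y) * Complex.exp (-(ξ * Real.pi * latC H y ^ 2))
        = ∑ w : ZMod (H ^ 2), ε * zet H ^ (latLift H w * latLift H y) * ψ w := by
      simp only [hε, hψ]
      exact g_eq H hH ξ hξ y
    have hF : FtransInv H (cXi H ξ) (x' - y)
        = ∑ p : ZMod (H ^ 2), ε * zet H ^ (latLift H p * latLift H (x' - y)) * (q p * S p) := by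
      unfold FtransInv
      refine Finset.sum_congr rfl fun p _ => ?_
      simp only [hε, hq, hS, hφ]
      rw [exp_lat, cXi_eq H ξ hξ p]
    simp only
    rw [hF, hg, mul_assoc, Finset.sum_mul_sum, Finset.mul_sum]
    refine Finset.sum_congr rfl fun p _ => ?_
    rw [Finset.mul_sum, hε]
  rw [step1]
  rw [Finset.sum_comm]
  -- now ∑ p ∑ y ∑ w ; swap inner to ∑ p ∑ w ∑ y and collapse over y, then w
  have step2 : ∀ p : ZMod (H ^ 2),
      (∑ y : ZMod (H ^ 2), ∑ w : ZMod (H ^ 2),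
          ε * ((ε * zet H ^ (latLift H p * latLift H (x' - y)) * (q p * S p))
            * (ε * zet H ^ (latLift H w * latLift H y) * ψ w)))
      = S p * ε ^ 3 * ((H : ℂ) ^ 2) * zet H ^ (latLift H p * latLift H x') := by
    intro p
    rw [Finset.sum_comm]
    have inner : ∀ w : ZMod (H ^ 2),
        (∑ y : ZMod (H ^ 2),
            ε * ((ε * zet H ^ (latLift H p * latLift H (x' - y)) * (q p * S p))
              * (ε * zet H ^ (latLift H w * latLift H y) * ψ w)))
        = (q p * S p * ψ w * ε ^ 3 * zet H ^ (latLift H p * latLift H x'))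
            * (if w - p = 0 then ((H : ℂ) ^ 2) else 0) := by
      intro w
      rw [← orth H h2 (w - p), Finset.mul_sum]
      refine Finset.sum_congr rfl fun y _ => ?_
      have hcomb : zet H ^ (latLift H p * latLift H (x' - y))
            * zet H ^ (latLift H w * latLift H y)
          = zet H ^ (latLift H p * latLift H x')
            * zet H ^ (latLift H (w - p) * latLift H y) := by
        rw [← zpow_add₀ hz0, ← zpow_add₀ hz0]
        apply zet_zpow_congr
        push_cast [latLift_intCast]
        ring
      trans (q p * S p * ψ w * ε ^ 3)
          * (zet H ^ (latLift H p * latLift H (x' - y))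
            * zet H ^ (latLift H w * latLift H y))
      · ring
      · rw [hcomb]; ring
    simp only [inner]
    rw [Finset.sum_eq_single p]
    · rw [sub_self, if_pos rfl]
      trans (q p * ψ p) * (S p * ε ^ 3 * ((H : ℂ) ^ 2)
          * zet H ^ (latLift H p * latLift H x'))
      · ring
      · rw [hqψ p, one_mul]
    · intro w _ hw
      rw [if_neg (sub_ne_zero.mpr hw), mul_zero]
    · intro hp
      exact absurd (Finset.mem_univ p) hp
  simp only [step2]
  -- Final collapse over p and x
  have step3 : ∀ p : ZMod (H ^ 2),
      S p * ε ^ 3 * ((H : ℂ) ^ 2) * zet H ^ (latLift H p * latLift H x')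
      = ∑ x : ZMod (H ^ 2), (ε ^ 4 * ((H : ℂ) ^ 2)) * φ x
          * zet H ^ (latLift H (x' - x) * latLift H p) := by
    intro p
    rw [hS]
    simp only
    simp only [Finset.sum_mul, Finset.mul_sum]
    refine Finset.sum_congr rfl fun x _ => ?_
    have hcomb : zet H ^ (-(latLift H p * latLift H x))
          * zet H ^ (latLift H p * latLift H x')
        = zet H ^ (latLift H (x' - x) * latLift H p) := by
      rw [← zpow_add₀ hz0]
      apply zet_zpow_congr
      push_cast [latLift_intCast]
      ring
    trans (ε ^ 4 * ((H : ℂ) ^ 2)) * φ x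
        * (zet H ^ (-(latLift H p * latLift H x))
          * zet H ^ (latLift H p * latLift H x'))
    · ring
    · rw [hcomb]
  simp only [step3]
  rw [Finset.sum_comm]
  have step4 : ∀ x : ZMod (H ^ 2),
      (∑ p : ZMod (H ^ 2), (ε ^ 4 * ((H : ℂ) ^ 2)) * φ x
          * zet H ^ (latLift H (x' - x) * latLift H p))
      = (ε ^ 4 * ((H : ℂ) ^ 2)) * φ x * (if x' - x = 0 then ((H : ℂ) ^ 2) else 0) := by
    intro x
    rw [← Finset.mul_sum, orth H h2 (x' - x)]
  simp only [step4]
  rw [Finset.sum_eq_single x']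
  · rw [sub_self, if_pos rfl]
    simp only [hε, hφ]
    field_simp
  · intro x _ hx
    rw [if_neg (sub_ne_zero.mpr (Ne.symm hx)), mul_zero]
  · intro hx
    exact absurd (Finset.mem_univ x') hx
end

section
/- Let H be a positive even integer. Then for every t ∈ ℤ, ∑_{z=−H²/2}^{H²/2−1} (1/H)·exp(−2πi t z/H²)·exp(−iπ z²/H²) = exp(−iπ/4)·exp(iπ t²/H²). Equivalently, with φ_i(x) = exp(−iπx²) on L_H, one has (Fφ_i)(p) = exp(−iπ/4)·conj(φ_i(p)) for every p ∈ L_H. -/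
open Finset Complex


lemma sum_window_eq (g : ℤ → ℂ) (N : ℤ) (hN : 0 < N)
    (hg : ∀ z, g (z + N) = g z) (a b : ℤ) :
    ∑ z ∈ Finset.Ico a (a + N), g z = ∑ z ∈ Finset.Ico b (b + N), g z := by
  have hmul : ∀ (k z : ℤ), g (z + k * N) = g z := by
    intro k
    induction k using Int.induction_on with
    | zero => simp
    | succ n ih =>
        intro z
        rw [show z + ((n : ℤ) + 1) * N = (z + n * N) + N by ring, hg, ih]
    | pred n ih =>
        intro z
        have h := hg (z + (-(n : ℤ) - 1) * N)
        rw [show z + (-(n : ℤ) - 1) * N + N = z + (-(n : ℤ)) * N by ring] at h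
        rw [← h, ih]
  have hNne : N ≠ 0 := ne_of_gt hN
  refine Finset.sum_nbij' (i := fun z => b + (z - b) % N) (j := fun z => a + (z - a) % N)
    ?_ ?_ ?_ ?_ ?_
  · intro z _
    have h1 := Int.emod_nonneg (z - b) hNne
    have h2 := Int.emod_lt_of_pos (z - b) hN
    simp only [Finset.mem_Ico]
    omega
  · intro z _
    have h1 := Int.emod_nonneg (z - a) hNne
    have h2 := Int.emod_lt_of_pos (z - a) hN
    simp only [Finset.mem_Ico]
    omega
  · intro z hz
    simp only [Finset.mem_Ico] at hz
    have : (b + (z - b) % N - a) % N = (z - a) % N := by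
      rw [show b + (z - b) % N - a = (z - b) % N + (b - a) by ring, Int.emod_add_emod]
      ring_nf
    rw [this, Int.emod_eq_of_lt (by omega) (by omega)]
    ring
  · intro z hz
    simp only [Finset.mem_Ico] at hz
    have : (a + (z - a) % N - b) % N = (z - b) % N := by
      rw [show a + (z - a) % N - b = (z - a) % N + (a - b) by ring, Int.emod_add_emod]
      ring_nf
    rw [this, Int.emod_eq_of_lt (by omega) (by omega)]
    ring
  · intro z _
    have h : b + (z - b) % N = z + (-( (z - b) / N)) * N := by
      rw [Int.emod_def]; ring
    rw [h, hmul]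

lemma sum_Ico_int_eq_range (m : ℕ) (f : ℤ → ℂ) :
    ∑ z ∈ Finset.Ico (0 : ℤ) (m : ℤ), f z = ∑ n ∈ Finset.range m, f (n : ℤ) := by
  refine Finset.sum_nbij' (i := fun z => z.toNat) (j := fun n => (n : ℤ)) ?_ ?_ ?_ ?_ ?_
  · intro z hz; simp only [Finset.mem_Ico] at hz; simp only [Finset.mem_range]; omega
  · intro n hn; simp only [Finset.mem_range] at hn; simp only [Finset.mem_Ico]; omega
  · intro z hz; simp only [Finset.mem_Ico] at hz; omega
  · intro n _; simp
  · intro z hz; simp only [Finset.mem_Ico] at hz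
    congr 1; omega



lemma base_sum (H k : ℕ) (hk : H = 2 * k) (hkpos : 0 < k) :
    ∑ n ∈ Finset.range (H^2),
        Complex.exp (-(Real.pi * Complex.I * (n:ℂ)^2 / (H:ℂ)^2))
      = (H : ℂ) * Complex.exp (-(Real.pi * Complex.I / 4)) := by
  have hH0 : 0 < H := by omega
  have hHC : (H:ℂ) ≠ 0 := Nat.cast_ne_zero.mpr (by omega)
  have hkC : (k:ℂ) ≠ 0 := Nat.cast_ne_zero.mpr (by omega)
  have hpi : (Real.pi:ℂ) ≠ 0 := by exact_mod_cast Real.pi_ne_zero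
  have hHk : (H:ℂ) = 2 * (k:ℂ) := by rw [hk]; push_cast; ring
  have h2 : ∑ n ∈ Finset.range (H^2),
        Complex.exp (-(Real.pi * Complex.I * (n:ℂ)^2 / (H:ℂ)^2))
      = ∑ p ∈ Finset.range H ×ˢ Finset.range H,
        Complex.exp (-(Real.pi * Complex.I * ((p.1 + H * p.2 : ℕ):ℂ)^2 / (H:ℂ)^2)) := by
    refine Finset.sum_nbij' (i := fun n => (n % H, n / H)) (j := fun p => p.1 + H * p.2)
      ?_ ?_ ?_ ?_ ?_
    · intro n hn
      simp only [Finset.mem_range, pow_two] at hn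
      simp only [Finset.mem_product, Finset.mem_range]
      exact ⟨Nat.mod_lt _ hH0, (Nat.div_lt_iff_lt_mul hH0).mpr hn⟩
    · intro p hp
      simp only [Finset.mem_product, Finset.mem_range] at hp
      simp only [Finset.mem_range, pow_two]
      calc p.1 + H * p.2 < H + H * p.2 := Nat.add_lt_add_right hp.1 _
        _ = H * (p.2 + 1) := by ring
        _ ≤ H * H := Nat.mul_le_mul_left _ hp.2
    · intro n _; dsimp only; exact Nat.mod_add_div n H
    · intro p hp
      simp only [Finset.mem_product, Finset.mem_range] at hp
      ext
      · simp only
        rw [Nat.add_mul_mod_self_left, Nat.mod_eq_of_lt hp.1]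
      · simp only
        rw [Nat.add_mul_div_left _ _ hH0, Nat.div_eq_of_lt hp.1, Nat.zero_add]
    · intro n _
      dsimp only
      rw [Nat.mod_add_div n H]
  rw [h2, Finset.sum_product]
  have h3 : ∀ x ∈ Finset.range H, ∀ y ∈ Finset.range H,
      Complex.exp (-(Real.pi * Complex.I * ((x + H * y : ℕ):ℂ)^2 / (H:ℂ)^2))
        = Complex.exp (-(Real.pi * Complex.I * (x:ℂ)^2 / (H:ℂ)^2)) *
          (Complex.exp (-(2 * Real.pi * Complex.I * ((x:ℂ) + (k:ℂ)) / (H:ℂ))))^y := by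
    intro x _ y _
    rw [← Complex.exp_nat_mul, ← Complex.exp_add]
    apply Complex.exp_eq_exp_iff_exists_int.mpr
    obtain ⟨c, hc⟩ : Even ((y:ℤ) * ((y:ℤ) - 1)) := by
      rcases Int.even_mul_succ_self ((y:ℤ) - 1) with ⟨c, hc⟩
      exact ⟨c, by linarith [hc]⟩
    have hc' : (y:ℂ) * ((y:ℂ) - 1) = (c:ℂ) + (c:ℂ) := by exact_mod_cast congrArg (Int.cast : ℤ → ℂ) hc
    refine ⟨-c, ?_⟩
    push_cast
    rw [hHk]
    field_simp
    linear_combination (-4*(k:ℂ)^2) * hc'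
  rw [Finset.sum_congr rfl (fun x hx => Finset.sum_congr rfl (fun y hy => h3 x hx y hy))]
  have h4 : ∀ x ∈ Finset.range H,
      ∑ y ∈ Finset.range H,
        Complex.exp (-(Real.pi * Complex.I * (x:ℂ)^2 / (H:ℂ)^2)) *
          (Complex.exp (-(2 * Real.pi * Complex.I * ((x:ℂ) + (k:ℂ)) / (H:ℂ))))^y
      = if x = k then Complex.exp (-(Real.pi * Complex.I * (x:ℂ)^2 / (H:ℂ)^2)) * H else 0 := by
    intro x hx
    simp only [Finset.mem_range] at hx
    rw [← Finset.mul_sum]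
    by_cases hxk : x = k
    · have hr : Complex.exp (-(2 * Real.pi * Complex.I * ((x:ℂ) + (k:ℂ)) / (H:ℂ))) = 1 := by
        have harg : -(2 * Real.pi * Complex.I * ((x:ℂ) + (k:ℂ)) / (H:ℂ))
            = ((-1 : ℤ):ℂ) * (2 * Real.pi * Complex.I) := by
          have hxk2 : (x:ℂ) + (k:ℂ) = (H:ℂ) := by rw [hxk, hHk]; ring
          rw [hxk2]
          push_cast
          field_simp
        rw [harg, Complex.exp_int_mul_two_pi_mul_I]
      rw [hr, if_pos hxk]
      simp
    · rw [if_neg hxk]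
      have hr1 : Complex.exp (-(2 * Real.pi * Complex.I * ((x:ℂ) + (k:ℂ)) / (H:ℂ))) ≠ 1 := by
        intro h
        rw [Complex.exp_eq_one_iff] at h
        obtain ⟨m, hm⟩ := h
        have h2pi : (2 * (Real.pi:ℂ) * Complex.I) ≠ 0 := by
          apply mul_ne_zero (mul_ne_zero two_ne_zero hpi) Complex.I_ne_zero
        have hxC : ((x:ℂ) + (k:ℂ)) = ((-m : ℤ):ℂ) * (H:ℂ) := by
          push_cast
          field_simp at hm
          have h2' : (2 * (Real.pi:ℂ) * Complex.I) * ((x:ℂ)+(k:ℂ))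
              = (2 * (Real.pi:ℂ) * Complex.I) * ((-(m:ℂ)) * (H:ℂ)) := by
            linear_combination (-(2*(Real.pi:ℂ)*Complex.I)) * hm
          have := mul_left_cancel₀ h2pi h2'
          rw [this]
        have hxz : (x:ℤ) + (k:ℤ) = (-m) * (H:ℤ) := by exact_mod_cast hxC
        rw [hk] at hxz
        push_cast at hxz
        set j : ℤ := -m with hj
        have hk1 : (1:ℤ) ≤ k := by exact_mod_cast hkpos
        have hxH : (x:ℤ) < 2 * (k:ℤ) := by exact_mod_cast (hk ▸ hx)
        have hxne : (x:ℤ) ≠ (k:ℤ) := fun h => hxk (by exact_mod_cast h)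
        have hjpos : 0 < j := by nlinarith [hxz]
        have hjne : j ≠ 1 := by
          intro h1
          rw [h1, one_mul] at hxz
          omega
        have hj2 : 2 ≤ j := by omega
        nlinarith [hxz, mul_le_mul_of_nonneg_right hj2 (by positivity : (0:ℤ) ≤ 2 * (k:ℤ))]
      rw [geom_sum_eq hr1]
      have hrH : (Complex.exp (-(2 * Real.pi * Complex.I * ((x:ℂ) + (k:ℂ)) / (H:ℂ))))^H = 1 := by
        rw [← Complex.exp_nat_mul]
        have harg : (H:ℂ) * (-(2 * Real.pi * Complex.I * ((x:ℂ) + (k:ℂ)) / (H:ℂ)))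
            = ((-(x:ℤ) - (k:ℤ) : ℤ):ℂ) * (2 * Real.pi * Complex.I) := by
          push_cast; field_simp; ring
        rw [harg, Complex.exp_int_mul_two_pi_mul_I]
      rw [hrH]
      simp
  rw [Finset.sum_congr rfl h4, Finset.sum_ite_eq' (Finset.range H) k
    (fun x => Complex.exp (-(Real.pi * Complex.I * (x:ℂ)^2 / (H:ℂ)^2)) * H),
    if_pos (Finset.mem_range.mpr (by omega))]
  have : -(Real.pi * Complex.I * (k:ℂ)^2 / (H:ℂ)^2) = -(Real.pi * Complex.I / 4) := by
    rw [hHk]; field_simp; ring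
  rw [this]; ring


/-- For a positive even integer `H` and every `t ∈ ℤ`,
`∑_{z=−H²/2}^{H²/2−1} (1/H)·exp(−2πi t z/H²)·exp(−iπ z²/H²)
  = exp(−iπ/4)·exp(iπ t²/H²)`;
i.e. the infinitesimal Fourier transform of `exp(−iπx²)` on `L_H` is
`exp(−iπ/4)` times its complex conjugate. -/
theorem fourier_exp_neg_i_pi_sq (H : ℕ) (hH : 0 < H) (hHe : Even H) (t : ℤ) :
    (Finset.Ico (-((H : ℤ) ^ 2 / 2)) ((H : ℤ) ^ 2 / 2)).sum
        (fun z : ℤ => (H : ℂ)⁻¹ *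
          Complex.exp (-(2 * Real.pi * Complex.I * (t : ℂ) * (z : ℂ) / (H : ℂ) ^ 2)) *
          Complex.exp (-(Real.pi * Complex.I * (z : ℂ) ^ 2 / (H : ℂ) ^ 2)))
      = Complex.exp (-(Real.pi * Complex.I / 4)) *
          Complex.exp (Real.pi * Complex.I * (t : ℂ) ^ 2 / (H : ℂ) ^ 2) := by
  obtain ⟨k, hk2⟩ := hHe
  have hk : H = 2 * k := by omega
  have hkpos : 0 < k := by omega
  have hHC : (H:ℂ) ≠ 0 := Nat.cast_ne_zero.mpr (by omega)
  have hkC : (k:ℂ) ≠ 0 := Nat.cast_ne_zero.mpr (by omega)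
  have hHk : (H:ℂ) = 2 * (k:ℂ) := by rw [hk]; push_cast; ring
  set N : ℤ := (H:ℤ)^2 with hN
  set M : ℤ := (H:ℤ)^2/2 with hMdef
  have hHz : (H:ℤ) = 2 * (k:ℤ) := by exact_mod_cast hk
  have hNk : N = 4 * (k:ℤ)^2 := by rw [hN, hHz]; ring
  have hM : M = 2 * (k:ℤ)^2 := by
    rw [hMdef, hHz, show (2*(k:ℤ))^2 = (2*(k:ℤ)^2) * 2 by ring, Int.mul_ediv_cancel _ two_ne_zero]
  have hNpos : 0 < N := by nlinarith [sq_nonneg (k:ℤ), hkpos, (by exact_mod_cast hkpos : (0:ℤ) < k)]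
  have hNC : ((N:ℤ):ℂ) = (H:ℂ)^2 := by rw [hN]; push_cast; ring
  -- the periodic function
  set g : ℤ → ℂ := fun z => Complex.exp (-(Real.pi * Complex.I * (z:ℂ)^2 / (H:ℂ)^2)) with hg
  have hper : ∀ z : ℤ, g (z + N) = g z := by
    intro z
    simp only [hg]
    apply Complex.exp_eq_exp_iff_exists_int.mpr
    refine ⟨-z - 2*(k:ℤ)^2, ?_⟩
    push_cast [hNk]
    rw [hHk]
    field_simp
    ring
  -- step A: rewrite the summand
  have hterm : ∀ z : ℤ, (H : ℂ)⁻¹ *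
          Complex.exp (-(2 * Real.pi * Complex.I * (t : ℂ) * (z : ℂ) / (H : ℂ) ^ 2)) *
          Complex.exp (-(Real.pi * Complex.I * (z : ℂ) ^ 2 / (H : ℂ) ^ 2))
      = ((H : ℂ)⁻¹ * Complex.exp (Real.pi * Complex.I * (t : ℂ) ^ 2 / (H : ℂ) ^ 2)) * g (z + t) := by
    intro z
    simp only [hg]
    rw [mul_assoc, ← Complex.exp_add]
    conv_rhs => rw [mul_assoc, ← Complex.exp_add]
    congr 1
    congr 1
    push_cast
    field_simp
    ring
  rw [show (Finset.Ico (-M) M).sum (fun z : ℤ => (H : ℂ)⁻¹ *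
          Complex.exp (-(2 * Real.pi * Complex.I * (t : ℂ) * (z : ℂ) / (H : ℂ) ^ 2)) *
          Complex.exp (-(Real.pi * Complex.I * (z : ℂ) ^ 2 / (H : ℂ) ^ 2)))
      = ∑ z ∈ Finset.Ico (-M) M, ((H : ℂ)⁻¹ *
          Complex.exp (Real.pi * Complex.I * (t : ℂ) ^ 2 / (H : ℂ) ^ 2)) * g (z + t) from
    Finset.sum_congr rfl (fun z _ => hterm z)]
  rw [← Finset.mul_sum]
  -- step B: shift by t
  have hshift : ∑ z ∈ Finset.Ico (-M) M, g (z + t) = ∑ z ∈ Finset.Ico (-M + t) (M + t), g z := by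
    rw [← Finset.map_add_right_Ico, Finset.sum_map]
    simp [addRightEmbedding]
  rw [hshift]
  -- step C: move window to [0, N)
  have hMt : M + t = (-M + t) + N := by
    have : M + M = N := by rw [hM, hNk]; ring
    linarith
  rw [hMt, sum_window_eq g N hNpos hper (-M + t) 0, zero_add]
  -- step D: to range and base_sum
  have hNnat : N = ((H^2 : ℕ) : ℤ) := by rw [hN]; push_cast; ring
  rw [hNnat, sum_Ico_int_eq_range]
  have : ∀ n ∈ Finset.range (H^2), g (n : ℤ)
      = Complex.exp (-(Real.pi * Complex.I * (n:ℂ)^2 / (H:ℂ)^2)) := by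
    intro n _
    simp only [hg, Int.cast_natCast]
  rw [Finset.sum_congr rfl this, base_sum H k hk hkpos]
  field_simp
end

section
/- Let ξ ∈ ℂ with Re(ξ) > 0 and let w ∈ ℂ. Let (h_j) be a sequence of positive real numbers and (N_j) a sequence of positive integers such that h_j → 0 and h_j·N_j → ∞ as j → ∞. Then lim_{j→∞} h_j·∑_{n=−N_j}^{N_j−1} exp(−πξ(h_j·n + w)²) = ξ^{−1/2}, where ξ^{−1/2} = exp(−(1/2)·Log ξ) with Log the principal branch of the logarithm. -/
open MeasureTheory Filter Complex Real

lemma gauss_integral (ξ : ℂ) (hξ : 0 < ξ.re) (w : ℂ) :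
    ∫ t : ℝ, Complex.exp (-((Real.pi : ℂ) * ξ * ((t : ℂ) + w) ^ 2)) =
      Complex.exp (-(1 / 2) * Complex.log ξ) := by
  have hξ0 : ξ ≠ 0 := fun h0 => by simp [h0] at hξ
  have hπ : ((Real.pi : ℂ)) ≠ 0 := Complex.ofReal_ne_zero.2 Real.pi_ne_zero
  have hb : ((-(Real.pi : ℂ) * ξ)).re < 0 := by
    simp [Complex.mul_re]
    nlinarith [Real.pi_pos, hξ]
  have h1 : ∀ t : ℝ, -((Real.pi : ℂ) * ξ * ((t : ℂ) + w) ^ 2)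
      = (-(Real.pi : ℂ) * ξ) * (t : ℂ) ^ 2 + (-2 * (Real.pi : ℂ) * ξ * w) * (t : ℂ)
        + (-(Real.pi : ℂ) * ξ * w ^ 2) := by
    intro t; ring
  simp_rw [h1]
  rw [integral_cexp_quadratic hb]
  have h2 : ((Real.pi : ℂ) / -(-(Real.pi : ℂ) * ξ)) = ξ⁻¹ := by field_simp
  have h3 : (-(Real.pi : ℂ) * ξ * w ^ 2) -
      (-2 * (Real.pi : ℂ) * ξ * w) ^ 2 / (4 * (-(Real.pi : ℂ) * ξ)) = 0 := by
    field_simp; ring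
  rw [h2, h3, Complex.exp_zero, mul_one,
    Complex.cpow_def_of_ne_zero (inv_ne_zero hξ0),
    Complex.log_inv ξ (fun hp => by rw [Complex.arg_eq_pi_iff] at hp; linarith [hp.1])]
  congr 1; ring

lemma floor_piece {H : ℝ} (hH : 0 < H) (n : ℤ) :
    ∀ x ∈ Set.Ico (H * (n : ℝ)) (H * ((n : ℝ) + 1)), ⌊x / H⌋ = n := by
  rintro x ⟨h1, h2⟩
  rw [Int.floor_eq_iff]
  constructor
  · rw [le_div_iff₀ hH]; linarith
  · rw [div_lt_iff₀ hH]; push_cast; linarith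

lemma sum_eq_integral (f : ℝ → ℂ) (hf : Measurable f) (H : ℝ) (hH : 0 < H) (M : ℕ) :
    ∫ x in Set.Ico (-(H * M)) (H * M), f (H * (⌊x / H⌋ : ℤ)) =
      (H : ℂ) * ∑ n ∈ Finset.Ico (-(M : ℤ)) (M : ℤ), f (H * (n : ℝ)) := by
  have hset : Set.Ico (-(H * M)) (H * M)
      = ⋃ n ∈ (Finset.Ico (-(M : ℤ)) (M : ℤ)), Set.Ico (H * (n : ℝ)) (H * ((n : ℝ) + 1)) := by
    ext x
    simp only [Set.mem_Ico, Set.mem_iUnion, Finset.mem_Ico, exists_prop]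
    constructor
    · rintro ⟨h1, h2⟩
      have hxH : x = H * (x / H) := by field_simp
      refine ⟨⌊x / H⌋, ⟨?_, ?_⟩, ?_, ?_⟩
      · rw [Int.le_floor]; push_cast; rw [le_div_iff₀ hH]; nlinarith
      · rw [Int.floor_lt]; push_cast; rw [div_lt_iff₀ hH]; nlinarith
      · calc H * (⌊x / H⌋ : ℝ) ≤ H * (x / H) :=
            mul_le_mul_of_nonneg_left (Int.floor_le _) hH.le
          _ = x := hxH.symm
      · nlinarith [Int.lt_floor_add_one (x / H)]
    · rintro ⟨n, ⟨hn1, hn2⟩, hx1, hx2⟩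
      have c1 : (-(M : ℝ)) ≤ n := by exact_mod_cast hn1
      have c2 : (n : ℝ) + 1 ≤ M := by exact_mod_cast (by omega : n + 1 ≤ (M : ℤ))
      constructor <;> nlinarith
  rw [hset, integral_biUnion_finset _ (fun i _ => measurableSet_Ico)]
  · rw [Finset.mul_sum]
    refine Finset.sum_congr rfl fun n _ => ?_
    rw [setIntegral_congr_fun measurableSet_Ico
      (g := fun _ => f (H * (n : ℝ))) (fun x hx => by rw [floor_piece hH n x hx]),
      setIntegral_const, measureReal_def, Real.volume_Ico]
    have he : H * ((n : ℝ) + 1) - H * n = H := by ring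
    rw [he, ENNReal.toReal_ofReal hH.le, Complex.real_smul]
  · intro m hm n hn hmn
    rcases hmn.lt_or_gt with hlt | hlt
    · refine Set.disjoint_left.2 fun x hx hx' => ?_
      have : (m : ℝ) + 1 ≤ n := by exact_mod_cast hlt
      have := hx.2; have := hx'.1; simp only at *; nlinarith
    · refine Set.disjoint_left.2 fun x hx hx' => ?_
      have : (n : ℝ) + 1 ≤ m := by exact_mod_cast hlt
      have := hx'.2; have := hx.1; simp only at *; nlinarith
  · intro n _
    rw [integrableOn_congr_fun (fun x hx => by rw [floor_piece hH n x hx]) measurableSet_Ico]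
    exact integrableOn_const measure_Ico_lt_top.ne

lemma gauss_norm (ξ : ℂ) (w : ℂ) (t : ℝ) :
    ‖Complex.exp (-((Real.pi : ℂ) * ξ * ((t : ℂ) + w) ^ 2))‖
      = Real.exp (-(Real.pi * (ξ.re * ((t + w.re)^2 - w.im^2)
          - ξ.im * (2 * (t + w.re) * w.im)))) := by
  rw [Complex.norm_exp]
  congr 1
  simp [pow_two, Complex.mul_re, Complex.mul_im, Complex.add_re, Complex.add_im]
  ring

lemma gauss_norm_le (ξ : ℂ) (hξ : 0 < ξ.re) (w : ℂ) (t : ℝ) :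
    ‖Complex.exp (-((Real.pi : ℂ) * ξ * ((t : ℂ) + w) ^ 2))‖ ≤
      Real.exp (Real.pi * ξ.re * w.im^2 + 2 * Real.pi * ξ.im^2 * w.im^2 / ξ.re) *
        Real.exp (-(Real.pi * ξ.re / 2) * (t + w.re)^2) := by
  rw [gauss_norm, ← Real.exp_add, Real.exp_le_exp]
  have hdiv : 2 * Real.pi * ξ.im^2 * w.im^2 / ξ.re * ξ.re
      = 2 * Real.pi * ξ.im^2 * w.im^2 := div_mul_cancel₀ _ hξ.ne'
  nlinarith [sq_nonneg (ξ.re * (t + w.re) - 2 * ξ.im * w.im), Real.pi_pos, hξ,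
    mul_pos Real.pi_pos hξ,
    mul_nonneg Real.pi_pos.le (sq_nonneg (ξ.re * (t + w.re) - 2 * ξ.im * w.im))]

/-- Riemann sums of the shifted complex Gaussian: if `Re ξ > 0`, `w ∈ ℂ`, `h_j → 0`
and `h_j·N_j → ∞`, then
`h_j·∑_{n=−N_j}^{N_j−1} exp(−πξ(h_j·n + w)²) → ξ^{−1/2} = exp(−(1/2)·Log ξ)`. -/
theorem riemann_sum_shifted_gaussian_tendsto (ξ : ℂ) (hξ : 0 < ξ.re) (w : ℂ)
    (h : ℕ → ℝ) (N : ℕ → ℕ) (hpos : ∀ j, 0 < h j) (hNpos : ∀ j, 0 < N j)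
    (hh : Filter.Tendsto h Filter.atTop (nhds 0))
    (hhN : Filter.Tendsto (fun j => h j * (N j : ℝ)) Filter.atTop Filter.atTop) :
    Filter.Tendsto
      (fun j => (h j : ℂ) * (Finset.Ico (-(N j : ℤ)) (N j : ℤ)).sum
        (fun n : ℤ => Complex.exp (-(Real.pi * ξ * ((h j : ℂ) * (n : ℂ) + w) ^ 2))))
      Filter.atTop (nhds (Complex.exp (-(1 / 2) * Complex.log ξ))) := by
  set f : ℝ → ℂ := fun t => Complex.exp (-((Real.pi : ℂ) * ξ * ((t : ℂ) + w) ^ 2)) with hfdef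
  have hfc : Continuous f := by fun_prop
  have hgmeas : ∀ j, Measurable fun x : ℝ => f (h j * ((⌊x / h j⌋ : ℤ) : ℝ)) := by
    intro j
    exact hfc.measurable.comp (measurable_const.mul
      (measurable_from_top.comp (Int.measurable_floor.comp (measurable_id.div_const _))))
  set F : ℕ → ℝ → ℂ := fun j => (Set.Ico (-(h j * (N j : ℝ))) (h j * (N j : ℝ))).indicator
    (fun x => f (h j * ((⌊x / h j⌋ : ℤ) : ℝ))) with hFdef
  set C1 : ℝ := Real.exp (Real.pi * ξ.re * w.im^2 + 2 * Real.pi * ξ.im^2 * w.im^2 / ξ.re)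
  set bound : ℝ → ℝ := fun x =>
    C1 * Real.exp (Real.pi * ξ.re / 2) * Real.exp (-(Real.pi * ξ.re / 4) * (x + w.re)^2)
    with hbdef
  have hbound_int : Integrable bound := by
    have h0 : 0 < Real.pi * ξ.re / 4 := by positivity
    have : Integrable fun x : ℝ => Real.exp (-(Real.pi * ξ.re / 4) * (x + w.re)^2) := by
      simpa using (integrable_exp_neg_mul_sq h0).comp_add_right w.re
    exact this.const_mul _
  have h_bound : ∀ᶠ j in atTop, ∀ᵐ x : ℝ, ‖F j x‖ ≤ bound x := by
    have h1 : ∀ᶠ j in atTop, h j < 1 := hh.eventually_lt_const one_pos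
    filter_upwards [h1] with j hj
    refine Eventually.of_forall fun x => ?_
    by_cases hx : x ∈ Set.Ico (-(h j * (N j : ℝ))) (h j * (N j : ℝ))
    · simp only [hFdef, Set.indicator_of_mem hx]
      set t := h j * ((⌊x / h j⌋ : ℤ) : ℝ) with htdef
      have ht1 : t ≤ x := by
        have h2 : h j * ((⌊x / h j⌋ : ℤ) : ℝ) ≤ h j * (x / h j) :=
          mul_le_mul_of_nonneg_left (Int.floor_le _) (hpos j).le
        have e : h j * (x / h j) = x := by
          rw [mul_comm]; exact div_mul_cancel₀ x (hpos j).ne'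
        linarith
      have ht2 : x - h j ≤ t := by
        have e : h j * (x / h j - 1) = x - h j := by
          rw [mul_sub, mul_one, mul_comm (h j) (x / h j), div_mul_cancel₀ x (hpos j).ne']
        nlinarith [Int.sub_one_lt_floor (x / h j), hpos j]
      have hsq : (x - t)^2 ≤ 1 := by nlinarith [hpos j]
      have key : -(Real.pi * ξ.re / 2) * (t + w.re)^2
          ≤ Real.pi * ξ.re / 2 + (-(Real.pi * ξ.re / 4) * (x + w.re)^2) := by
        nlinarith [mul_nonneg (mul_pos Real.pi_pos hξ).le (sq_nonneg ((t + w.re) - (x - t))),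
          mul_nonneg (mul_pos Real.pi_pos hξ).le (sub_nonneg.2 hsq)]
      calc ‖f t‖ ≤ C1 * Real.exp (-(Real.pi * ξ.re / 2) * (t + w.re)^2) :=
            gauss_norm_le ξ hξ w t
        _ ≤ C1 * (Real.exp (Real.pi * ξ.re / 2)
              * Real.exp (-(Real.pi * ξ.re / 4) * (x + w.re)^2)) := by
            have step2 : Real.exp (-(Real.pi * ξ.re / 2) * (t + w.re)^2)
                ≤ Real.exp (Real.pi * ξ.re / 2)
                  * Real.exp (-(Real.pi * ξ.re / 4) * (x + w.re)^2) := by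
              rw [← Real.exp_add]; exact Real.exp_le_exp.2 key
            exact mul_le_mul_of_nonneg_left step2 (Real.exp_pos _).le
        _ = bound x := by rw [hbdef]; ring
    · simp only [hFdef, Set.indicator_of_notMem hx, norm_zero, hbdef]
      positivity
  have h_lim : ∀ᵐ x : ℝ, Tendsto (fun j => F j x) atTop (nhds (f x)) := by
    refine Eventually.of_forall fun x => ?_
    have hmem : ∀ᶠ j in atTop, x ∈ Set.Ico (-(h j * (N j : ℝ))) (h j * (N j : ℝ)) := by
      filter_upwards [hhN.eventually_ge_atTop (|x| + 1)] with j hj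
      constructor
      · nlinarith [neg_abs_le x]
      · nlinarith [le_abs_self x]
    have hts : Tendsto (fun j => h j * ((⌊x / h j⌋ : ℤ) : ℝ)) atTop (nhds x) := by
      apply tendsto_of_tendsto_of_tendsto_of_le_of_le (g := fun j => x - h j)
        (h := fun _ => x)
      · simpa using (tendsto_const_nhds (x := x)).sub hh
      · exact tendsto_const_nhds
      · intro j
        have e : h j * (x / h j - 1) = x - h j := by
          rw [mul_sub, mul_one, mul_comm (h j) (x / h j), div_mul_cancel₀ x (hpos j).ne']
        nlinarith [Int.sub_one_lt_floor (x / h j), hpos j]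
      · intro j
        have h2 : h j * ((⌊x / h j⌋ : ℤ) : ℝ) ≤ h j * (x / h j) :=
          mul_le_mul_of_nonneg_left (Int.floor_le _) (hpos j).le
        have e : h j * (x / h j) = x := by
          rw [mul_comm]; exact div_mul_cancel₀ x (hpos j).ne'
        linarith
    have hft : Tendsto (fun j => f (h j * ((⌊x / h j⌋ : ℤ) : ℝ))) atTop (nhds (f x)) :=
      (hfc.tendsto x).comp hts
    exact hft.congr' (hmem.mono fun j hj => (Set.indicator_of_mem hj _).symm)
  have hDCT := tendsto_integral_filter_of_dominated_convergence (μ := volume) bound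
    (Eventually.of_forall fun j => ((hgmeas j).indicator measurableSet_Ico).aestronglyMeasurable)
    h_bound hbound_int h_lim
  rw [gauss_integral ξ hξ w] at hDCT
  refine hDCT.congr fun j => ?_
  rw [integral_indicator measurableSet_Ico,
    sum_eq_integral f hfc.measurable (h j) (hpos j) (N j)]
  congr 1
  refine Finset.sum_congr rfl fun n _ => ?_
  simp only [hfdef]
  norm_cast
end
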